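/- (Coverage of utility adjustments.) Suppose z : [n] × [d] → ℝ≥0 satisfies z_{ik} ≤ φ_k(R_i), and define x_j = (y_j + max_k z_{ik} t_{jk}/φ_k(R_i))/2 for j ∈ R_i. Then for every dimension k, c_k Σ_{j∈S} x_j t_{jk} ≥ (c_k/2)(Σ_{j∈S} y_j t_{jk} + Σ_{i∈[n]} z_{ik}). -/
import Mathlib


/-- Maximum of a function over `Fin d` (with `0 < d`). -/
noncomputable def finMax {d : ℕ} (hd : 0 < d) (f : Fin d → ℝ) : ℝ :=
  Finset.univ.sup' ⟨⟨0, hd⟩, Finset.mem_univ _⟩ f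

lemma le_finMax {d : ℕ} (hd : 0 < d) (f : Fin d → ℝ) (k : Fin d) :
    f k ≤ finMax hd f :=
  Finset.le_sup' f (Finset.mem_univ k)

/-- Coverage of utility adjustments: the combined solution
`x_j = (y_j + max_k z_{ik} t_{jk}/φ_k(R_i))/2` gives each dimension `k` utility
at least `(c_k/2)(Σ_j y_j t_{jk} + Σ_i z_{ik})`. -/
theorem stmt11 (d n m : ℕ) (hd : 0 < d)
    (c : Fin d → ℝ) (hc : ∀ k, 0 < c k)
    (rnd : Fin m → Fin n)
    (t : Fin m → Fin d → ℝ) (ht : ∀ j k, t j k = 0 ∨ t j k = 1)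
    (φ : Fin n → Fin d → ℝ)
    (hφ : ∀ i k, φ i k = ∑ j ∈ Finset.univ.filter (fun j => rnd j = i), t j k)
    (y : Fin m → ℝ) (hy : ∀ j, 0 ≤ y j)
    (z : Fin n → Fin d → ℝ) (hz0 : ∀ i k, 0 ≤ z i k)
    (hzub : ∀ i k, z i k ≤ φ i k)
    (x : Fin m → ℝ)
    (hx : ∀ j, x j =
      (y j + finMax hd (fun k => z (rnd j) k * t j k / φ (rnd j) k)) / 2) :
    ∀ k, c k / 2 * ((∑ j, y j * t j k) + ∑ i, z i k)
      ≤ c k * ∑ j, x j * t j k := by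
  intro k
  set M : Fin m → ℝ :=
    fun j => finMax hd (fun k' => z (rnd j) k' * t j k' / φ (rnd j) k') with hM
  have hφnn : ∀ i k', (0:ℝ) ≤ φ i k' := fun i k' => le_trans (hz0 i k') (hzub i k')
  have htnn : ∀ j k', (0:ℝ) ≤ t j k' := by
    intro j k'; rcases ht j k' with h | h <;> simp [h]
  have hMnn : ∀ j, 0 ≤ M j := by
    intro j
    have h0 : (0:ℝ) ≤ z (rnd j) ⟨0, hd⟩ * t j ⟨0, hd⟩ / φ (rnd j) ⟨0, hd⟩ := by
      have := hz0 (rnd j) ⟨0, hd⟩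
      have := htnn j ⟨0, hd⟩
      have := hφnn (rnd j) ⟨0, hd⟩
      positivity
    exact le_trans h0 (le_finMax hd (fun k' => z (rnd j) k' * t j k' / φ (rnd j) k') ⟨0, hd⟩)
  have key : ∑ i, z i k ≤ ∑ j, M j * t j k := by
    rw [← Finset.sum_fiberwise_of_maps_to (fun j _ => Finset.mem_univ (rnd j))
      (fun j => M j * t j k)]
    apply Finset.sum_le_sum
    intro i _
    have step : ∑ j ∈ Finset.univ.filter (fun j => rnd j = i),
        z i k * t j k / φ i k ≤
        ∑ j ∈ Finset.univ.filter (fun j => rnd j = i), M j * t j k := by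
      apply Finset.sum_le_sum
      intro j hj
      have hji : rnd j = i := (Finset.mem_filter.mp hj).2
      have hcomp : z (rnd j) k * t j k / φ (rnd j) k ≤ M j :=
        le_finMax hd (fun k' => z (rnd j) k' * t j k' / φ (rnd j) k') k
      rw [hji] at hcomp
      rcases ht j k with h | h
      · simp [h]
      · simpa [h] using hcomp
    refine le_trans ?_ step
    by_cases hφ0 : φ i k = 0
    · have hz : z i k = 0 := le_antisymm (hφ0 ▸ hzub i k) (hz0 i k)
      simp [hz]
    · have : ∑ j ∈ Finset.univ.filter (fun j => rnd j = i),
          z i k * t j k / φ i k = z i k / φ i k *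
          ∑ j ∈ Finset.univ.filter (fun j => rnd j = i), t j k := by
        rw [Finset.mul_sum]
        apply Finset.sum_congr rfl
        intro j _; ring
      rw [this, ← hφ i k, div_mul_cancel₀ _ hφ0]
  have hsum : ∑ j, x j * t j k =
      ((∑ j, y j * t j k) + ∑ j, M j * t j k) / 2 := by
    rw [← Finset.sum_add_distrib, Finset.sum_div]
    apply Finset.sum_congr rfl
    intro j _
    rw [hx j]; ring
  rw [hsum]
  calc c k / 2 * ((∑ j, y j * t j k) + ∑ i, z i k)
      ≤ c k / 2 * ((∑ j, y j * t j k) + ∑ j, M j * t j k) := by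
        apply mul_le_mul_of_nonneg_left (by linarith) (by linarith [hc k])
    _ = c k * (((∑ j, y j * t j k) + ∑ j, M j * t j k) / 2) := by ring
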